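/- Let f : A ⥤ B be a functor that reflects isomorphisms. Then the canonical comparison functor r : A ⥤ P and the functor u : P ⥤ A (sending (b, g, φ) to the domain of g) form an equivalence of categories: u ∘ r = 𝟭_A and there is a natural isomorphism r ∘ u ≅ 𝟭_P. -/

import Mathlib

open CategoryTheory

universe v₁ v₂ u₁ u₂

/-- The functor `c_A : A ⥤ Arrow A` sending an object to its identity arrow. -/
def idArrowFunctor (A : Type u₁) [Category.{v₁} A] : A ⥤ Arrow A where
  obj a := Arrow.mk (𝟙 a)
  map {a a'} x := Arrow.homMk (u := x) (v := x) (by simp)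

variable {A : Type u₁} {B : Type u₂} [Category.{v₁} A] [Category.{v₂} B]

/-- The pseudo-pullback of `c_B : B ⥤ B^𝟚` and `f^𝟚 : A^𝟚 ⥤ B^𝟚`, realized as the full
subcategory of the comma category `(c_B ↓ f^𝟚)` spanned by the objects whose structural
morphism is an isomorphism. -/
abbrev PseudoPullback (f : A ⥤ B) :=
  ObjectProperty.FullSubcategory (fun X : Comma (idArrowFunctor B) f.mapArrow => IsIso X.hom)

/-- The canonical comparison functor `r : A ⥤ P`. -/
def comparison (f : A ⥤ B) : A ⥤ PseudoPullback f where
  obj a :=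
    ⟨{ left := f.obj a
       right := Arrow.mk (𝟙 a)
       hom := (Arrow.isoMk (f := (idArrowFunctor B).obj (f.obj a))
         (g := f.mapArrow.obj (Arrow.mk (𝟙 a))) (Iso.refl _) (Iso.refl _) (by simp [idArrowFunctor, Functor.mapArrow])).hom },
      inferInstance⟩
  map {a a'} x :=
    { hom :=
      { left := f.map x
        right := Arrow.homMk (u := x) (v := x) (by simp)
        w := by ext <;> first | (simp [idArrowFunctor]; done) | exact (Category.comp_id _).trans (Category.id_comp _).symm | (dsimp [idArrowFunctor, Arrow.isoMk, Arrow.homMk]; erw [Category.comp_id, Category.id_comp]; rfl) } }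

/-- The functor `u : P ⥤ A` sending `(b, g, φ)` to the domain of `g`. -/
def pbProj (f : A ⥤ B) : PseudoPullback f ⥤ A where
  obj X := X.obj.right.left
  map g := g.hom.right.left

/-- If `f : A ⥤ B` reflects isomorphisms, then the canonical comparison functor `r : A ⥤ P`
and the functor `u : P ⥤ A` form an equivalence of categories: `u ∘ r = 𝟭 A` and there is a
natural isomorphism `r ∘ u ≅ 𝟭 P`. -/
theorem comparison_pbProj_equivalence (f : A ⥤ B)
    (hf : ∀ {a a' : A} (g : a ⟶ a'), IsIso (f.map g) → IsIso g) :
    comparison f ⋙ pbProj f = 𝟭 A ∧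
      Nonempty (pbProj f ⋙ comparison f ≅ 𝟭 (PseudoPullback f)) := by
  have key : ∀ X : PseudoPullback f, IsIso X.obj.right.hom := by
    intro X
    have h1 : IsIso X.obj.hom := X.2
    have h2 : IsIso X.obj.hom.left := Arrow.isIso_left X.obj.hom
    have hw : X.obj.hom.left ≫ f.map X.obj.right.hom = 𝟙 _ ≫ X.obj.hom.right :=
      X.obj.hom.w
    have h3 : IsIso (f.map X.obj.right.hom) := by
      have : f.map X.obj.right.hom = inv X.obj.hom.left ≫ X.obj.hom.right := by
        erw [IsIso.eq_inv_comp]; exact hw.trans (Category.id_comp _)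
      rw [this]; exact IsIso.comp_isIso' (IsIso.inv_isIso (f := X.obj.hom.left)) (Arrow.isIso_right X.obj.hom)
    exact hf _ h3
  refine ⟨rfl, ⟨NatIso.ofComponents (fun X => ?_) (fun {X Y} g => ?_)⟩⟩
  · have := key X
    have h1 : IsIso X.obj.hom := X.2
    have h2 : IsIso X.obj.hom.left := Arrow.isIso_left X.obj.hom
    have hw : X.obj.hom.left ≫ f.map X.obj.right.hom = 𝟙 _ ≫ X.obj.hom.right :=
      X.obj.hom.w
    refine (fun i => ⟨⟨i.hom⟩, ⟨i.inv⟩, InducedCategory.hom_ext i.hom_inv_id, InducedCategory.hom_ext i.inv_hom_id⟩ :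
      (((pbProj f ⋙ comparison f).obj X).obj ≅ ((𝟭 (PseudoPullback f)).obj X).obj) →
        ((pbProj f ⋙ comparison f).obj X ≅ (𝟭 (PseudoPullback f)).obj X))
      (Comma.isoMk (asIso X.obj.hom.left).symm
        (Arrow.isoMk (Iso.refl _) (@asIso _ _ _ _ X.obj.right.hom (key X))
          (by show 𝟙 _ ≫ X.obj.right.hom = 𝟙 _ ≫ X.obj.right.hom; rfl)) ?_)
    ext
    · show inv X.obj.hom.left ≫ X.obj.hom.left = 𝟙 _ ≫ f.map (𝟙 _)
      simp; rfl
    · show inv X.obj.hom.left ≫ X.obj.hom.right = 𝟙 _ ≫ f.map X.obj.right.hom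
      erw [IsIso.inv_comp_eq]
      exact (Category.id_comp _).symm.trans (hw.symm.trans (whisker_eq _ (Category.id_comp _).symm))
  · have wl : g.hom.left ≫ Y.obj.hom.left = X.obj.hom.left ≫ f.map g.hom.right.left := by
      have := congrArg CommaMorphism.left g.hom.w
      exact (Arrow.comp_left _ _).symm.trans (this.trans (Arrow.comp_left _ _))
    haveI hXi : IsIso X.obj.hom.left := by
      haveI : IsIso X.obj.hom := X.2; infer_instance
    haveI hYi : IsIso Y.obj.hom.left := by
      haveI : IsIso Y.obj.hom := Y.2; infer_instance
    apply InducedCategory.hom_ext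
    apply CommaMorphism.ext
    · haveI : IsIso X.obj.hom := X.2
      haveI : IsIso Y.obj.hom := Y.2
      show f.map g.hom.right.left ≫ @inv _ _ _ _ Y.obj.hom.left hYi = @inv _ _ _ _ X.obj.hom.left hXi ≫ g.hom.left
      erw [IsIso.comp_inv_eq, Category.assoc, wl]
      exact (@IsIso.inv_hom_id_assoc _ _ _ _ _ hXi _ _).symm
    · apply CommaMorphism.ext
      · show g.hom.right.left ≫ 𝟙 _ = 𝟙 _ ≫ g.hom.right.left
        simp
      · show g.hom.right.left ≫ Y.obj.right.hom = X.obj.right.hom ≫ g.hom.right.right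
        exact g.hom.right.w
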